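/- For 0 < κ < 1, the infimum over α ∈ (0,∞) of g_κ(α) = 1 - exp(-(κ·Γ(1/α + 1))^α) is 0, attained in the limit α → +∞. -/

import Mathlib

/-! As `α → ∞` the base `κ Γ(1/α + 1)` tends to `κ < 1`, so its `α`-th power tends to `0` and
`g_κ(α) → 1 - e⁰ = 0`; since every value of `g_κ` is nonnegative, `0` is the infimum. -/

open Real Filter Topology

theorem tendsto_Gamma_one_div_add_one_atTop :
    Tendsto (fun α : ℝ => Gamma (1 / α + 1)) atTop (𝓝 1) := by
  have hcont : ContinuousAt Gamma 1 :=
    (differentiableAt_Gamma fun m h => by linarith [(Nat.cast_nonneg m : (0 : ℝ) ≤ m)]).continuousAt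
  have harg : Tendsto (fun α : ℝ => 1 / α + 1) atTop (𝓝 1) := by
    simpa only [one_div, zero_add] using tendsto_inv_atTop_zero.add_const (1 : ℝ)
  simpa only [Gamma_one, Function.comp_def] using hcont.tendsto.comp harg

theorem tendsto_rpow_self_atTop_zero {f : ℝ → ℝ} {L : ℝ} (hf : Tendsto f atTop (𝓝 L))
    (hL : L < 1) (hf0 : ∀ᶠ α in atTop, 0 ≤ f α) :
    Tendsto (fun α => f α ^ α) atTop (𝓝 0) := by
  obtain ⟨c, hLc, hc1⟩ := exists_between hL
  have hL0 : 0 ≤ L := ge_of_tendsto hf hf0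
  refine tendsto_of_tendsto_of_tendsto_of_le_of_le' tendsto_const_nhds
    (tendsto_rpow_atTop_of_base_lt_one c (by linarith) hc1) ?_ ?_
  · filter_upwards [hf0] with α hα using rpow_nonneg hα α
  · filter_upwards [hf0, hf.eventually_le_const hLc, eventually_ge_atTop 0] with α hα hαc hα0
    exact rpow_le_rpow hα hαc hα0

theorem one_sub_exp_neg_nonneg {x : ℝ} (hx : 0 ≤ x) : 0 ≤ 1 - exp (-x) := by
  have : exp (-x) ≤ 1 := exp_le_one_iff.mpr (by linarith)
  linarith

theorem isGLB_image_of_tendsto {α β : Type*} [TopologicalSpace β] [LinearOrder β]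
    [OrderTopology β] {f : α → β} {s : Set α} {l : Filter α}
    [l.NeBot] {a : β} (hle : ∀ x ∈ s, a ≤ f x) (hs : s ∈ l) (hf : Tendsto f l (𝓝 a)) :
    IsGLB (f '' s) a :=
  isGLB_of_mem_closure (Set.forall_mem_image.mpr hle)
    (mem_closure_of_tendsto hf (mem_of_superset hs fun _ hx => Set.mem_image_of_mem f hx))

theorem g_inf_zero_of_kappa_lt_one (κ : ℝ) (hκ0 : 0 < κ) (hκ1 : κ < 1) :
    IsGLB ((fun α => 1 - Real.exp (-(κ * Real.Gamma (1 / α + 1)) ^ α)) '' Set.Ioi 0) 0 ∧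
    Tendsto (fun α => 1 - Real.exp (-(κ * Real.Gamma (1 / α + 1)) ^ α)) atTop (nhds 0) := by
  have hbase_nonneg : ∀ α : ℝ, 0 < α → 0 ≤ κ * Gamma (1 / α + 1) := fun α hα =>
    mul_nonneg hκ0.le (Gamma_pos_of_pos (by positivity)).le
  have hpow : Tendsto (fun α : ℝ => (κ * Gamma (1 / α + 1)) ^ α) atTop (𝓝 0) := by
    refine tendsto_rpow_self_atTop_zero (L := κ) ?_ hκ1 ?_
    · simpa only [mul_one] using tendsto_Gamma_one_div_add_one_atTop.const_mul κ
    · filter_upwards [eventually_gt_atTop 0] using hbase_nonneg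
  have hlim : Tendsto (fun α => 1 - exp (-(κ * Gamma (1 / α + 1)) ^ α)) atTop (𝓝 0) := by
    simpa only [neg_zero, exp_zero, sub_self] using (hpow.neg.rexp).const_sub 1
  refine ⟨isGLB_image_of_tendsto (fun α hα => ?_) (Ioi_mem_atTop 0) hlim, hlim⟩
  exact one_sub_exp_neg_nonneg (rpow_nonneg (hbase_nonneg α hα) α)
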